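/- arXiv:2006.06596 — 3 statements merged into one kernel-verified Lean document; each statement's English description precedes it below -/
import Mathlib

section
/- Let l⁰, l^∞ be positive integers and let w⁰ > w^∞ ≥ 1 be relatively prime positive integers. If l^∞ ≤ 2l⁰w⁰, then the cubic g(b) = −l⁰(w⁰)²·b³ + (l^∞ − 2l⁰w^∞)·w⁰·b² − (l^∞ − 2l⁰w⁰)·w^∞·b + l⁰(w^∞)² has at most one positive real root. -/
/-- The cubic `g(b)` of Proposition `numcscS`, with real parameter `linf`. -/
def G (l0 w0 winf : ℕ) (linf b : ℝ) : ℝ :=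
  -(l0:ℝ)*(w0:ℝ)^2*b^3 + (linf - 2*(l0:ℝ)*(winf:ℝ))*(w0:ℝ)*b^2
    - (linf - 2*(l0:ℝ)*(w0:ℝ))*(winf:ℝ)*b + (l0:ℝ)*(winf:ℝ)^2

/-- If `l^∞ ≤ 2l⁰w⁰` then the cubic `g` has at most one positive real root. -/
theorem stmt_2 (l0 linf w0 winf : ℕ) (hl0 : 0 < l0) (hlinf : 0 < linf)
    (hwinf : 1 ≤ winf) (hw : winf < w0) (hcop : Nat.Coprime w0 winf)
    (hle : linf ≤ 2*l0*w0) :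
    {b : ℝ | 0 < b ∧ G l0 w0 winf (linf:ℝ) b = 0}.encard ≤ 1 := by
  rw [Set.encard_le_one_iff]
  rintro x y ⟨hx, gx⟩ ⟨hy, gy⟩
  unfold G at gx gy
  have hl0' : (0:ℝ) < l0 := by exact_mod_cast hl0
  have hwinf' : (1:ℝ) ≤ winf := by exact_mod_cast hwinf
  have hw0' : (0:ℝ) < w0 := by
    have : 0 < w0 := lt_of_le_of_lt (Nat.zero_le _) hw
    exact_mod_cast this
  have hle' : (linf:ℝ) ≤ 2*l0*w0 := by exact_mod_cast hle
  have hB : (0:ℝ) ≤ (2*(l0:ℝ)*w0 - linf) * winf := by nlinarith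
  have hfac : (0:ℝ) < ((l0:ℝ)*(winf:ℝ)^2)*(x+y)
      + ((2*(l0:ℝ)*w0 - linf)*(winf:ℝ))*(x*y)
      + ((l0:ℝ)*(w0:ℝ)^2)*(x^2*y^2) := by
    have hwinf0 : (0:ℝ) < (winf:ℝ) := by linarith
    have h1 : (0:ℝ) < ((l0:ℝ)*(winf:ℝ)^2)*(x+y) :=
      mul_pos (by positivity) (by linarith)
    have h2 : (0:ℝ) ≤ ((2*(l0:ℝ)*w0 - linf)*(winf:ℝ))*(x*y) :=
      mul_nonneg hB (by positivity)
    have h3 : (0:ℝ) < ((l0:ℝ)*(w0:ℝ)^2)*(x^2*y^2) := by positivity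
    linarith
  have hid : (y - x) * (((l0:ℝ)*(winf:ℝ)^2)*(x+y)
      + ((2*(l0:ℝ)*w0 - linf)*(winf:ℝ))*(x*y)
      + ((l0:ℝ)*(w0:ℝ)^2)*(x^2*y^2))
      = y^2 * (-(l0:ℝ)*(w0:ℝ)^2*x^3 + ((linf:ℝ) - 2*(l0:ℝ)*(winf:ℝ))*(w0:ℝ)*x^2
          - ((linf:ℝ) - 2*(l0:ℝ)*(w0:ℝ))*(winf:ℝ)*x + (l0:ℝ)*(winf:ℝ)^2)
        - x^2 * (-(l0:ℝ)*(w0:ℝ)^2*y^3 + ((linf:ℝ) - 2*(l0:ℝ)*(winf:ℝ))*(w0:ℝ)*y^2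
          - ((linf:ℝ) - 2*(l0:ℝ)*(w0:ℝ))*(winf:ℝ)*y + (l0:ℝ)*(winf:ℝ)^2) := by
    ring
  rw [gx, gy] at hid
  have hid' : (y - x) * (((l0:ℝ)*(winf:ℝ)^2)*(x+y)
      + ((2*(l0:ℝ)*w0 - linf)*(winf:ℝ))*(x*y)
      + ((l0:ℝ)*(w0:ℝ)^2)*(x^2*y^2)) = 0 := by linarith
  rcases mul_eq_zero.mp hid' with h | h
  · linarith
  · exact absurd h (ne_of_gt hfac)
end

section
/- Let l⁰, l^∞ be positive integers and let w⁰ > w^∞ ≥ 1 be relatively prime positive integers. If 2l^∞ > l⁰(16w⁰ − 5w^∞), then the cubic g(b) = −l⁰(w⁰)²·b³ + (l^∞ − 2l⁰w^∞)·w⁰·b² − (l^∞ − 2l⁰w⁰)·w^∞·b + l⁰(w^∞)² has three distinct positive real roots: one in the open interval (0, w^∞/(2w⁰)), one in (w^∞/(2w⁰), w^∞/w⁰), and one in (w^∞/w⁰, +∞). -/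
set_option maxHeartbeats 2000000 in
/-- If `2l^∞ > l⁰(16w⁰ - 5w^∞)` then `g` has three distinct positive real roots,
located in `(0, w^∞/(2w⁰))`, `(w^∞/(2w⁰), w^∞/w⁰)` and `(w^∞/w⁰, ∞)`. -/
theorem stmt_8 (l0 linf w0 winf : ℕ) (hl0 : 0 < l0) (hlinf : 0 < linf)
    (hwinf : 1 ≤ winf) (hw : winf < w0) (hcop : Nat.Coprime w0 winf)
    (hbig : (l0:ℝ)*(16*(w0:ℝ) - 5*(winf:ℝ)) < 2*(linf:ℝ)) :
    ∃ b1 b2 b3 : ℝ,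
      (0 < b1 ∧ b1 < (winf:ℝ)/(2*(w0:ℝ)) ∧ G l0 w0 winf (linf:ℝ) b1 = 0) ∧
      ((winf:ℝ)/(2*(w0:ℝ)) < b2 ∧ b2 < (winf:ℝ)/(w0:ℝ) ∧
        G l0 w0 winf (linf:ℝ) b2 = 0) ∧
      ((winf:ℝ)/(w0:ℝ) < b3 ∧ G l0 w0 winf (linf:ℝ) b3 = 0) := by
  have hL1 : (1:ℝ) ≤ (l0:ℝ) := Nat.one_le_cast.mpr hl0
  have hM1 : (1:ℝ) ≤ (linf:ℝ) := Nat.one_le_cast.mpr hlinf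
  have hV1 : (1:ℝ) ≤ (winf:ℝ) := Nat.one_le_cast.mpr hwinf
  have hVW : (winf:ℝ) < (w0:ℝ) := Nat.cast_lt.mpr hw
  have hWpos : (0:ℝ) < (w0:ℝ) := by linarith
  have hVpos : (0:ℝ) < (winf:ℝ) := by linarith
  have hW2 : (2:ℝ) ≤ (w0:ℝ) := by
    have : 2 ≤ w0 := lt_of_le_of_lt hwinf hw
    exact_mod_cast this
  have hL0 : (0:ℝ) < (l0:ℝ) := by linarith
  have hcont : Continuous (G l0 w0 winf (linf:ℝ)) := by
    unfold G; continuity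
  have hg0 : 0 < G l0 w0 winf (linf:ℝ) 0 := by
    have : G l0 w0 winf (linf:ℝ) 0 = (l0:ℝ)*(winf:ℝ)^2 := by simp [G]
    rw [this]; positivity
  have hgm1 : G l0 w0 winf (linf:ℝ) ((winf:ℝ)/(2*(w0:ℝ))) < 0 := by
    have heq : G l0 w0 winf (linf:ℝ) ((winf:ℝ)/(2*(w0:ℝ))) =
        -((winf:ℝ)^2*(2*(linf:ℝ) - (l0:ℝ)*(16*(w0:ℝ) - 5*(winf:ℝ))))/(8*(w0:ℝ)) := by
      simp only [G]; field_simp; ring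
    rw [heq]
    apply div_neg_of_neg_of_pos
    · have : 0 < (winf:ℝ)^2*(2*(linf:ℝ) - (l0:ℝ)*(16*(w0:ℝ) - 5*(winf:ℝ))) := by
        have h2 : 0 < 2*(linf:ℝ) - (l0:ℝ)*(16*(w0:ℝ) - 5*(winf:ℝ)) := by linarith
        positivity
      linarith
    · positivity
  have hgm2 : 0 < G l0 w0 winf (linf:ℝ) ((winf:ℝ)/(w0:ℝ)) := by
    have heq : G l0 w0 winf (linf:ℝ) ((winf:ℝ)/(w0:ℝ)) =
        3*(l0:ℝ)*(winf:ℝ)^2*((w0:ℝ) - (winf:ℝ))/(w0:ℝ) := by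
      simp only [G]; field_simp; ring
    rw [heq]
    have : 0 < (w0:ℝ) - (winf:ℝ) := by linarith
    positivity
  obtain ⟨B, hBdef⟩ : ∃ B:ℝ, B = (linf:ℝ)*(w0:ℝ) + 4*(l0:ℝ)*(winf:ℝ)*(w0:ℝ) + (l0:ℝ)*(winf:ℝ)^2 + 1 := ⟨_, rfl⟩
  have hB1 : (1:ℝ) ≤ B := by
    rw [hBdef]
    nlinarith [mul_pos (show (0:ℝ)<(linf:ℝ) by linarith) hWpos,
      mul_pos (mul_pos (show (0:ℝ)<(l0:ℝ) by linarith) hVpos) hWpos,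
      mul_pos (show (0:ℝ)<(l0:ℝ) by linarith) (mul_pos hVpos hVpos), sq_nonneg (winf:ℝ)]
  have hBpos : (0:ℝ) < B := by linarith
  have hgB : G l0 w0 winf (linf:ℝ) B < 0 := by
    simp only [G]
    have hB2 : B ≤ B^2 := by nlinarith [mul_nonneg (show (0:ℝ) ≤ B by linarith) (show (0:ℝ) ≤ B-1 by linarith)]
    have hB3 : B^2 ≤ B^3 := by nlinarith [mul_nonneg (mul_nonneg (show (0:ℝ) ≤ B by linarith) (show (0:ℝ) ≤ B by linarith)) (show (0:ℝ) ≤ B-1 by linarith)]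
    have hcoef : (1:ℝ) ≤ (l0:ℝ)*(w0:ℝ)^2 := by nlinarith [mul_nonneg (show (0:ℝ) ≤ (l0:ℝ)-1 by linarith) (sq_nonneg (w0:ℝ)), sq_nonneg ((w0:ℝ)-1)]
    have e1 : B^3 ≤ (l0:ℝ)*(w0:ℝ)^2*B^3 := by
      have h := mul_nonneg (show (0:ℝ) ≤ (l0:ℝ)*(w0:ℝ)^2 - 1 by linarith) (pow_pos hBpos 3).le
      linarith [h]
    have e2 : ((linf:ℝ) - 2*(l0:ℝ)*(winf:ℝ))*(w0:ℝ)*B^2 ≤ (linf:ℝ)*(w0:ℝ)*B^2 := by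
      have h := mul_nonneg (show (0:ℝ) ≤ 2*(l0:ℝ)*(winf:ℝ)*(w0:ℝ) by positivity) (sq_nonneg B)
      linarith [h]
    have e3 : -(((linf:ℝ) - 2*(l0:ℝ)*(w0:ℝ))*(winf:ℝ)*B) ≤ 2*(l0:ℝ)*(w0:ℝ)*(winf:ℝ)*B := by
      have h := mul_nonneg (show (0:ℝ) ≤ (linf:ℝ)*(winf:ℝ) by positivity) hBpos.le
      linarith [h]
    have e4 : 2*(l0:ℝ)*(w0:ℝ)*(winf:ℝ)*B ≤ 2*(l0:ℝ)*(w0:ℝ)*(winf:ℝ)*B^2 := by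
      have h := mul_nonneg (show (0:ℝ) ≤ 2*(l0:ℝ)*(w0:ℝ)*(winf:ℝ) by positivity) (show (0:ℝ) ≤ B^2 - B by linarith)
      linarith [h]
    have e5 : (l0:ℝ)*(winf:ℝ)^2 ≤ (l0:ℝ)*(winf:ℝ)^2*B^2 := by
      have h := mul_nonneg (show (0:ℝ) ≤ (l0:ℝ)*(winf:ℝ)^2 by positivity) (show (0:ℝ) ≤ B^2 - 1 by nlinarith)
      linarith [h]
    have key : (linf:ℝ)*(w0:ℝ)*B^2 + 2*(l0:ℝ)*(w0:ℝ)*(winf:ℝ)*B^2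
        + (l0:ℝ)*(winf:ℝ)^2*B^2 < B^3 := by
      have hlt : (linf:ℝ)*(w0:ℝ) + 2*(l0:ℝ)*(w0:ℝ)*(winf:ℝ) + (l0:ℝ)*(winf:ℝ)^2 < B := by
        rw [hBdef]
        have h := mul_pos (mul_pos hL0 hVpos) hWpos
        linarith [h]
      calc (linf:ℝ)*(w0:ℝ)*B^2 + 2*(l0:ℝ)*(w0:ℝ)*(winf:ℝ)*B^2 + (l0:ℝ)*(winf:ℝ)^2*B^2
          = ((linf:ℝ)*(w0:ℝ) + 2*(l0:ℝ)*(w0:ℝ)*(winf:ℝ) + (l0:ℝ)*(winf:ℝ)^2)*B^2 := by ring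
        _ < B*B^2 := by
            apply mul_lt_mul_of_pos_right hlt (by positivity)
        _ = B^3 := by ring
    linarith
  have hm1pos : 0 < (winf:ℝ)/(2*(w0:ℝ)) := by positivity
  have hm1m2 : (winf:ℝ)/(2*(w0:ℝ)) < (winf:ℝ)/(w0:ℝ) := by
    rw [div_lt_div_iff₀ (by linarith) hWpos]; nlinarith
  have hm2B : (winf:ℝ)/(w0:ℝ) < B := by
    have : (winf:ℝ)/(w0:ℝ) < 1 := (div_lt_one hWpos).2 hVW
    linarith
  obtain ⟨b1, hb1mem, hb1⟩ := intermediate_value_Ioo' hm1pos.le hcont.continuousOn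
    (show (0:ℝ) ∈ Set.Ioo (G l0 w0 winf (linf:ℝ) ((winf:ℝ)/(2*(w0:ℝ))))
      (G l0 w0 winf (linf:ℝ) 0) from ⟨hgm1, hg0⟩)
  obtain ⟨b2, hb2mem, hb2⟩ := intermediate_value_Ioo hm1m2.le hcont.continuousOn
    (show (0:ℝ) ∈ Set.Ioo (G l0 w0 winf (linf:ℝ) ((winf:ℝ)/(2*(w0:ℝ))))
      (G l0 w0 winf (linf:ℝ) ((winf:ℝ)/(w0:ℝ))) from ⟨hgm1, hgm2⟩)
  obtain ⟨b3, hb3mem, hb3⟩ := intermediate_value_Ioo' hm2B.le hcont.continuousOn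
    (show (0:ℝ) ∈ Set.Ioo (G l0 w0 winf (linf:ℝ) B)
      (G l0 w0 winf (linf:ℝ) ((winf:ℝ)/(w0:ℝ))) from ⟨hgB, hgm2⟩)
  exact ⟨b1, b2, b3, ⟨hb1mem.1, hb1mem.2, hb1⟩, ⟨hb2mem.1, hb2mem.2, hb2⟩, ⟨hb3mem.1, hb3⟩⟩
end

section
/- Let l⁰, l^∞ be positive integers and let w⁰ > w^∞ ≥ 1 be relatively prime positive integers. If the cubic g(b) = −l⁰(w⁰)²·b³ + (l^∞ − 2l⁰w^∞)·w⁰·b² − (l^∞ − 2l⁰w⁰)·w^∞·b + l⁰(w^∞)² has at least two distinct positive real roots, then 2l^∞ − l⁰(w⁰ + w^∞) > 2l⁰w⁰ + l⁰(w⁰ − w^∞); equivalently, l^∞ > 2l⁰w⁰. -/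
/-- If the cubic `g` has at least two distinct positive real roots then
`2l^∞ - l⁰(w⁰+w^∞) > 2l⁰w⁰ + l⁰(w⁰-w^∞)`; equivalently `l^∞ > 2l⁰w⁰`. -/
theorem stmt_9 (l0 linf w0 winf : ℕ) (hl0 : 0 < l0) (hlinf : 0 < linf)
    (hwinf : 1 ≤ winf) (hw : winf < w0) (hcop : Nat.Coprime w0 winf)
    (hroots : ∃ b1 b2 : ℝ, 0 < b1 ∧ 0 < b2 ∧ b1 ≠ b2 ∧
      G l0 w0 winf (linf:ℝ) b1 = 0 ∧ G l0 w0 winf (linf:ℝ) b2 = 0) :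
    2*(linf:ℝ) - (l0:ℝ)*((w0:ℝ)+(winf:ℝ))
        > 2*(l0:ℝ)*(w0:ℝ) + (l0:ℝ)*((w0:ℝ)-(winf:ℝ)) ∧
      2*(l0:ℝ)*(w0:ℝ) < (linf:ℝ) := by
  obtain ⟨b1, b2, hb1, hb2, hne, h1, h2⟩ := hroots
  unfold G at h1 h2
  have hl0' : (0:ℝ) < (l0:ℝ) := by exact_mod_cast hl0
  have hw0' : (0:ℝ) < (w0:ℝ) := by
    have : 0 < w0 := lt_of_le_of_lt (Nat.zero_le _) hw
    exact_mod_cast this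
  have hwinf' : (1:ℝ) ≤ (winf:ℝ) := by exact_mod_cast hwinf
  -- set A = l0*w0^2, B = (linf - 2 l0 winf) w0, C = (linf - 2 l0 w0) winf
  have hd : b1 - b2 ≠ 0 := sub_ne_zero.mpr hne
  -- divided difference: the quadratic symmetric relation
  have key : -((l0:ℝ)*(w0:ℝ)^2)*(b1^2 + b1*b2 + b2^2)
      + ((linf:ℝ) - 2*(l0:ℝ)*(winf:ℝ))*(w0:ℝ)*(b1 + b2)
      - ((linf:ℝ) - 2*(l0:ℝ)*(w0:ℝ))*(winf:ℝ) = 0 := by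
    have h3 : (b1 - b2) * (-((l0:ℝ)*(w0:ℝ)^2)*(b1^2 + b1*b2 + b2^2)
        + ((linf:ℝ) - 2*(l0:ℝ)*(winf:ℝ))*(w0:ℝ)*(b1 + b2)
        - ((linf:ℝ) - 2*(l0:ℝ)*(w0:ℝ))*(winf:ℝ)) = 0 := by
      linear_combination h1 - h2
    exact (mul_eq_zero.mp h3).resolve_left hd
  -- product of roots relation: b1*b2*(B - A*(b1+b2)) = D
  have hprod : b1*b2*(((linf:ℝ) - 2*(l0:ℝ)*(winf:ℝ))*(w0:ℝ)
      - ((l0:ℝ)*(w0:ℝ)^2)*(b1 + b2)) = (l0:ℝ)*(winf:ℝ)^2 := by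
    linear_combination -h1 + b1 * key
  -- hence B - A*(b1+b2) > 0
  have hD : (0:ℝ) < (l0:ℝ)*(winf:ℝ)^2 := by positivity
  have hb3 : (0:ℝ) < ((linf:ℝ) - 2*(l0:ℝ)*(winf:ℝ))*(w0:ℝ)
      - ((l0:ℝ)*(w0:ℝ)^2)*(b1 + b2) := by
    nlinarith [mul_pos hb1 hb2]
  -- then C = A*b1*b2 + (b1+b2)*(B - A*(b1+b2)) > 0
  have hC : (0:ℝ) < ((linf:ℝ) - 2*(l0:ℝ)*(w0:ℝ))*(winf:ℝ) := by
    nlinarith [mul_pos hb1 hb2, mul_pos (add_pos hb1 hb2) hb3,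
      mul_pos (mul_pos hl0' (pow_pos hw0' 2)) (mul_pos hb1 hb2)]
  have hmain : 2*(l0:ℝ)*(w0:ℝ) < (linf:ℝ) := by nlinarith
  exact ⟨by nlinarith, hmain⟩
end
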